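/- Let m ≥ 3, n ≥ 5, let S be a self-identifying code of K_m × P_n, and suppose (v_i, j) ∉ S for some 2 ≤ j ≤ n−3. Then both neighboring columns contain a codeword: S ∩ C_{j−1} ≠ ∅ and S ∩ C_{j+1} ≠ ∅. -/

import Mathlib

open SimpleGraph Set

/-- Closed neighborhood of a vertex. -/
def cNbr {V : Type*} (G : SimpleGraph V) (v : V) : Set V := insert v (G.neighborSet v)

/-- `S` is a self-identifying code of `G`. -/
def IsSID {V : Type*} (G : SimpleGraph V) (S : Set V) : Prop :=
  S.Nonempty ∧ ∀ v : V, (cNbr G v ∩ S).Nonempty ∧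
    (⋂ c ∈ cNbr G v ∩ S, cNbr G c) = {v}

/-- Minimum cardinality of a self-identifying code. -/
noncomputable def gammaSID {V : Type*} (G : SimpleGraph V) : ℕ :=
  sInf {k | ∃ S : Set V, IsSID G S ∧ S.ncard = k}

/-- Direct product of the complete graph `K_m` with the path `P_n`. -/
def KmPn (m n : ℕ) : SimpleGraph (Fin m × Fin n) where
  Adj u w := u.1 ≠ w.1 ∧ ((u.2 : ℕ) + 1 = (w.2 : ℕ) ∨ (w.2 : ℕ) + 1 = (u.2 : ℕ))
  symm := ⟨fun u w h => ⟨h.1.symm, h.2.symm⟩⟩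
  loopless := ⟨fun u h => h.1 rfl⟩

/-- Direct product of the complete graph `K_m` with the cycle `C_n`. -/
def KmCn (m n : ℕ) : SimpleGraph (Fin m × ZMod n) where
  Adj u w := u.1 ≠ w.1 ∧ (u.2 + 1 = w.2 ∨ w.2 + 1 = u.2)
  symm := ⟨fun u w h => ⟨h.1.symm, h.2.symm⟩⟩
  loopless := ⟨fun u h => h.1 rfl⟩

/-!
If `(v_i, j) ∉ S` and `C_{j-1}` holds no codeword, every codeword in `N[(v_i, j)]` lies in
`C_{j+1}` outside row `i`, so it is adjacent to `(v_i, j+2)` as well; the intersection that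
should equal `{(v_i, j)}` then also contains `(v_i, j+2)`. Symmetrically `(v_i, j-2)` rules out
an empty `C_{j+1}`.
-/

theorem IsSID.eq_of_forall_adj {V : Type*} {G : SimpleGraph V} {S : Set V} (hS : IsSID G S)
    {v w : V} (hv : v ∉ S) (h : ∀ c ∈ S, G.Adj v c → G.Adj c w) : w = v := by
  have hw : w ∈ ⋂ c ∈ cNbr G v ∩ S, cNbr G c := by
    refine Set.mem_iInter₂.2 fun c ⟨hc, hcS⟩ => ?_
    rcases hc with rfl | hadj
    · exact absurd hcS hv
    · exact Or.inr (h c hcS hadj)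
  rwa [(hS.2 v).2] at hw

theorem KmPn.exists_mem_column_adj_not_adj {m n : ℕ} {S : Set (Fin m × Fin n)}
    (hS : IsSID (KmPn m n) S) {i : Fin m} {a b : Fin n} (hv : (i, a) ∉ S) (hab : a ≠ b) :
    ∃ c ∈ S, ((a : ℕ) + 1 = c.2 ∨ (c.2 : ℕ) + 1 = a) ∧
      ¬((c.2 : ℕ) + 1 = b ∨ (b : ℕ) + 1 = c.2) := by
  by_contra! h
  have hba : ((i, b) : Fin m × Fin n) = (i, a) :=
    hS.eq_of_forall_adj hv fun c hcS hadj => ⟨Ne.symm hadj.1, h c hcS hadj.2⟩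
  exact hab (Prod.ext_iff.1 hba).2.symm

theorem stmt10 (m n : ℕ) (S : Set (Fin m × Fin n))
    (hS : IsSID (KmPn m n) S) (i : Fin m) (j : ℕ) (hj1 : 2 ≤ j) (hj2 : j ≤ n - 3)
    (hv : (i, (⟨j, by omega⟩ : Fin n)) ∉ S) :
    (S ∩ {p : Fin m × Fin n | p.2 = (⟨j - 1, by omega⟩ : Fin n)}).Nonempty ∧
      (S ∩ {p : Fin m × Fin n | p.2 = (⟨j + 1, by omega⟩ : Fin n)}).Nonempty := by
  constructor
  · obtain ⟨c, hcS, hca, hcb⟩ := KmPn.exists_mem_column_adj_not_adj hS hv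
      (b := ⟨j + 2, by omega⟩) (by rw [Ne, Fin.ext_iff]; dsimp; omega)
    exact ⟨c, hcS, Fin.ext (by dsimp at hca hcb ⊢; omega)⟩
  · obtain ⟨c, hcS, hca, hcb⟩ := KmPn.exists_mem_column_adj_not_adj hS hv
      (b := ⟨j - 2, by omega⟩) (by rw [Ne, Fin.ext_iff]; dsimp; omega)
    exact ⟨c, hcS, Fin.ext (by dsimp at hca hcb ⊢; omega)⟩
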